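/- For every internal inductive game tree T and any baseline assignment b, the variance of the root's baseline-corrected value decomposes as Var_z[v̂(T; z)] = Σ_{a ∈ A(T)} (σ_T(a)²/q_T(a)) · Var_{z'}[v̂(T_a; z')] + Var_{a∼q_T}[ (σ_T(a)/q_T(a))·(û(T_a) − b_T(a)) ], where the first sum ranges over actions with z' a trajectory of T_a, and the last term is the variance of the real-valued function a ↦ (σ_T(a)/q_T(a))·(û(T_a) − b_T(a)) of a random action a distributed according to q_T. -/

import Mathlib

/-- An inductive game tree: either a leaf carrying a utility `u`, or an internal node
carrying a nonempty finite action set `Fin (n+1)`, a subtree `child a` for each action,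
a strategy distribution `σ`, a sampling distribution `q`, and baseline values `b`. -/
inductive GameTree : Type
  | leaf (u : ℝ) : GameTree
  | node (n : ℕ) (child : Fin (n + 1) → GameTree)
      (σ : Fin (n + 1) → ℝ) (q : Fin (n + 1) → ℝ) (b : Fin (n + 1) → ℝ) : GameTree

namespace GameTree

/-- Expected utility `û`: `û(leaf u) = u` and `û(T) = Σ_a σ_T(a)·û(T_a)` at internal nodes. -/
noncomputable def eu : GameTree → ℝ
  | leaf u => u
  | node n child σ _ _ => ∑ a : Fin (n + 1), σ a * eu (child a)

/-- Validity: at every internal node, `σ` is a probability distribution and `q` is a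
probability distribution with `q a > 0` for every action `a`. -/
def Valid : GameTree → Prop
  | leaf _ => True
  | node n child σ q _ =>
      (∀ a, 0 ≤ σ a) ∧ (∑ a : Fin (n + 1), σ a = 1) ∧
      (∀ a, 0 < q a) ∧ (∑ a : Fin (n + 1), q a = 1) ∧
      (∀ a, Valid (child a))

/-- A sampled trajectory of `T`: a root-to-leaf path in the tree. -/
inductive Traj : GameTree → Type
  | leaf (u : ℝ) : Traj (.leaf u)
  | step {n : ℕ} {child : Fin (n + 1) → GameTree} {σ q b : Fin (n + 1) → ℝ}
      (astar : Fin (n + 1)) (t : Traj (child astar)) : Traj (.node n child σ q b)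

/-- Expectation `E_z[f(z)]` over the trajectory distribution (each trajectory has the
product of the `q`-probabilities of its edges as probability). -/
noncomputable def expT : (T : GameTree) → (Traj T → ℝ) → ℝ
  | leaf u, f => f (.leaf u)
  | node n child _ q _, f =>
      ∑ a : Fin (n + 1), q a * expT (child a) (fun t => f (.step a t))

/-- Variance `Var_z[f(z)]` over the trajectory distribution. -/
noncomputable def varT (T : GameTree) (f : Traj T → ℝ) : ℝ :=
  expT T (fun z => (f z - expT T f) ^ 2)

/-- Baseline-corrected sampled value `v̂(T; z) = Σ_a σ_T(a)·v̂(T, a; z)`, with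
`v̂(T, a; z) = (𝟙[a = a*]/q_T(a))·(v̂(T_a; z') − b_T(a)) + b_T(a)`. -/
noncomputable def bval : {T : GameTree} → Traj T → ℝ
  | _, .leaf u => u
  | _, @Traj.step n child σ q b astar t =>
      ∑ a : Fin (n + 1), σ a *
        ((if a = astar then (1 : ℝ) else 0) / q a * (bval t - b a) + b a)

/-- Baseline-corrected sampled action value `v̂(T, a; z)` at an internal root:
`(𝟙[a = a*]/q_T(a))·(v̂(T_a; z') − b_T(a)) + b_T(a)` where `z = a*·z'`. -/
noncomputable def bvalAct {n : ℕ} {child : Fin (n + 1) → GameTree}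
    {σ q b : Fin (n + 1) → ℝ}
    (a : Fin (n + 1)) : Traj (.node n child σ q b) → ℝ
  | .step astar t => (if a = astar then (1 : ℝ) else 0) / q a * (bval t - b a) + b a

/-- Variance `Var_{a∼q}[g(a)]` of a real-valued function `g` of a random action `a`
distributed according to `q`. -/
noncomputable def varFin {m : ℕ} (q g : Fin m → ℝ) : ℝ :=
  ∑ a, q a * (g a - ∑ a', q a' * g a') ^ 2

lemma expT_add (T : GameTree) (f g : Traj T → ℝ) :
    expT T (fun z => f z + g z) = expT T f + expT T g := by
  induction T with
  | leaf u => simp [expT]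
  | node n child σ q b ih =>
      simp only [expT]
      rw [← Finset.sum_add_distrib]
      refine Finset.sum_congr rfl fun a _ => ?_
      rw [ih a, mul_add]

lemma expT_smul (T : GameTree) (c : ℝ) (f : Traj T → ℝ) :
    expT T (fun z => c * f z) = c * expT T f := by
  induction T with
  | leaf u => simp [expT]
  | node n child σ q b ih =>
      simp only [expT]
      rw [Finset.mul_sum]
      refine Finset.sum_congr rfl fun a _ => ?_
      rw [ih a]; ring

lemma expT_const (T : GameTree) (hV : Valid T) (c : ℝ) :
    expT T (fun _ => c) = c := by
  induction T with
  | leaf u => simp [expT]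
  | node n child σ q b ih =>
      obtain ⟨_, _, _, hq1, hVc⟩ := hV
      simp only [expT]
      rw [Finset.sum_congr rfl fun a _ => by rw [ih a (hVc a)]]
      rw [← Finset.sum_mul, hq1, one_mul]

lemma bval_step {n : ℕ} {child : Fin (n + 1) → GameTree} {σ q b : Fin (n + 1) → ℝ}
    (a : Fin (n + 1)) (t : Traj (child a)) :
    bval (Traj.step (σ := σ) (q := q) (b := b) a t)
      = σ a / q a * (bval t - b a) + ∑ j, σ j * b j := by
  have h : ∀ j : Fin (n + 1),
      σ j * ((if j = a then (1 : ℝ) else 0) / q j * (bval t - b j) + b j)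
        = (if j = a then σ a / q a * (bval t - b a) else 0) + σ j * b j := by
    intro j
    by_cases hj : j = a
    · subst hj; simp; ring
    · simp [hj]
  show (∑ j, σ j * ((if j = a then (1 : ℝ) else 0) / q j * (bval t - b j) + b j)) = _
  rw [Finset.sum_congr rfl fun j _ => h j, Finset.sum_add_distrib,
    Finset.sum_ite_eq' Finset.univ a (fun _ => σ a / q a * (bval t - b a))]
  simp

lemma expT_affine (T : GameTree) (hV : Valid T) (c d : ℝ) (f : Traj T → ℝ) :
    expT T (fun z => c * f z + d) = c * expT T f + d := by
  rw [expT_add T (fun z => c * f z) (fun _ => d), expT_smul, expT_const T hV]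

lemma expT_affine_sq (T : GameTree) (hV : Valid T) (c d : ℝ) (f : Traj T → ℝ) :
    expT T (fun z => (c * f z + d) ^ 2)
      = c ^ 2 * varT T f + (c * expT T f + d) ^ 2 := by
  set e := expT T f with he
  have hfun : (fun z => (c * f z + d) ^ 2)
      = fun z => c ^ 2 * (f z - e) ^ 2 + ((2 * c * (c * e + d)) * f z + (d ^ 2 - c ^ 2 * e ^ 2)) := by
    funext z; ring
  rw [hfun, expT_add T _ (fun z => (2 * c * (c * e + d)) * f z + (d ^ 2 - c ^ 2 * e ^ 2)),
    expT_smul, expT_affine T hV, varT, ← he]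
  ring

lemma expT_bval (T : GameTree) (hV : Valid T) :
    expT T (fun z => bval z) = eu T := by
  induction T with
  | leaf u => simp [expT, bval, eu]
  | node n child σ q b ih =>
      obtain ⟨hσ0, hσ1, hq0, hq1, hVc⟩ := hV
      simp only [expT, eu]
      have h1 : ∀ a, expT (child a)
          (fun t => bval (Traj.step (σ := σ) (q := q) (b := b) a t))
          = σ a / q a * (eu (child a) - b a) + ∑ j, σ j * b j := by
        intro a
        have hfun : (fun t : Traj (child a) =>
            bval (Traj.step (σ := σ) (q := q) (b := b) a t))
            = fun t => σ a / q a * bval t + ((∑ j, σ j * b j) - σ a / q a * b a) := by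
          funext t; rw [bval_step]; ring
        rw [hfun, expT_affine (child a) (hVc a), ih a (hVc a)]
        ring
      rw [Finset.sum_congr rfl fun a _ => by rw [h1 a]]
      have h2 : ∀ a : Fin (n + 1),
          q a * (σ a / q a * (eu (child a) - b a) + ∑ j, σ j * b j)
            = σ a * eu (child a) - σ a * b a + q a * ∑ j, σ j * b j := by
        intro a
        have hqa : q a ≠ 0 := (hq0 a).ne'
        field_simp
      rw [Finset.sum_congr rfl fun a _ => by rw [h2 a], Finset.sum_add_distrib,
        Finset.sum_sub_distrib, ← Finset.sum_mul, hq1, one_mul]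
      ring

end GameTree

/-- One-step variance decomposition at the root: for every internal game
tree and arbitrary baseline,
`Var_z[v̂(T; z)] = Σ_a (σ_T(a)²/q_T(a))·Var_{z'}[v̂(T_a; z')]
  + Var_{a∼q_T}[(σ_T(a)/q_T(a))·(û(T_a) − b_T(a))]`. -/
theorem var_oneStep_decomposition (n : ℕ) (child : Fin (n + 1) → GameTree)
    (σ q b : Fin (n + 1) → ℝ)
    (hV : GameTree.Valid (.node n child σ q b)) :
    GameTree.varT (.node n child σ q b) (fun z => GameTree.bval z)
      = (∑ a : Fin (n + 1),
          σ a ^ 2 / q a * GameTree.varT (child a) (fun z => GameTree.bval z))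
        + GameTree.varFin q (fun a => σ a / q a * (GameTree.eu (child a) - b a)) := by
  obtain ⟨hσ0, hσ1, hq0, hq1, hVc⟩ := hV
  have hV' : GameTree.Valid (.node n child σ q b) := ⟨hσ0, hσ1, hq0, hq1, hVc⟩
  rw [GameTree.varT, GameTree.expT_bval _ hV']
  have heu : GameTree.eu (.node n child σ q b) = ∑ j, σ j * GameTree.eu (child j) := rfl
  rw [heu]
  set S : ℝ := ∑ j, σ j * (GameTree.eu (child j) - b j) with hS
  have hSsplit : S = (∑ j, σ j * GameTree.eu (child j)) - ∑ j, σ j * b j := by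
    rw [hS, ← Finset.sum_sub_distrib]
    exact Finset.sum_congr rfl fun j _ => by ring
  have key : ∀ a : Fin (n + 1), GameTree.expT (child a)
      (fun t => (GameTree.bval (GameTree.Traj.step (σ := σ) (q := q) (b := b) a t)
        - ∑ j, σ j * GameTree.eu (child j)) ^ 2)
      = (σ a / q a) ^ 2 * GameTree.varT (child a) (fun z => GameTree.bval z)
        + (σ a / q a * (GameTree.eu (child a) - b a) - S) ^ 2 := by
    intro a
    have hfun : (fun t : GameTree.Traj (child a) =>
        (GameTree.bval (GameTree.Traj.step (σ := σ) (q := q) (b := b) a t)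
          - ∑ j, σ j * GameTree.eu (child j)) ^ 2)
        = fun t => (σ a / q a * GameTree.bval t
            + ((∑ j, σ j * b j) - σ a / q a * b a - ∑ j, σ j * GameTree.eu (child j))) ^ 2 := by
      funext t; rw [GameTree.bval_step]; ring
    rw [hfun, GameTree.expT_affine_sq (child a) (hVc a), GameTree.expT_bval _ (hVc a)]
    congr 1
    rw [hSsplit]
    ring
  show (∑ a, q a * GameTree.expT (child a)
      (fun t => (GameTree.bval (GameTree.Traj.step (σ := σ) (q := q) (b := b) a t)
        - ∑ j, σ j * GameTree.eu (child j)) ^ 2)) = _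
  rw [Finset.sum_congr rfl fun a _ => by rw [key a]]
  rw [GameTree.varFin]
  have hgbar : (∑ a', q a' * (σ a' / q a' * (GameTree.eu (child a') - b a'))) = S := by
    rw [hS]
    refine Finset.sum_congr rfl fun j _ => ?_
    have hqj : q j ≠ 0 := (hq0 j).ne'
    field_simp
  rw [hgbar, ← Finset.sum_add_distrib]
  refine Finset.sum_congr rfl fun a _ => ?_
  have hqa : q a ≠ 0 := (hq0 a).ne'
  rw [mul_add]
  congr 1
  field_simp
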